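/- Let n ≥ 1, let T be a type, let s ∈ (ℤ/2ℤ)^n with s ≠ 0, and let f : (ℤ/2ℤ)^n → T satisfy the Simon promise: f(x) = f(y) if and only if y = x or y = x + s. For j ∈ (ℤ/2ℤ)^n, define P_f(j) = 4^{−n} Σ_{v ∈ range f} |Σ_{x : f(x) = v} (−1)^{j·x}|². Then P_f(j) = 2^(1−n) if j·s = 0 and P_f(j) = 0 if j·s = 1. In particular, Σ_j P_f(j) = 1 and the measurement outcome j of Simon's algorithm is uniformly distributed over the 2^(n−1) elements j with j·s = 0. -/
import Mathlib


open Finset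

/-- The outcome distribution of one run of Simon's algorithm for `f`:
`P_f(j) = 4^{-n} Σ_{v ∈ range f} |Σ_{x : f(x) = v} (-1)^{j·x}|²`. -/
noncomputable def simonProb {n : ℕ} {T : Type} [DecidableEq T]
    (f : (Fin n → ZMod 2) → T) (j : Fin n → ZMod 2) : ℝ :=
  (4 : ℝ) ^ (-(n : ℤ)) *
    ∑ v ∈ univ.image f,
      |∑ x ∈ univ.filter fun x => f x = v, (-1 : ℝ) ^ ((∑ i, j i * x i).val)| ^ 2

lemma zmod2_cases (c : ZMod 2) : c = 0 ∨ c = 1 := by revert c; decide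

lemma neg_one_pow_val_add (a b : ZMod 2) :
    (-1 : ℝ) ^ ((a + b).val) = (-1) ^ a.val * (-1) ^ b.val := by
  rcases zmod2_cases a with ha | ha <;> rcases zmod2_cases b with hb | hb <;>
    subst ha <;> subst hb <;> norm_num [show ZMod.val (2:ZMod 2) = 0 from rfl, show ZMod.val (1:ZMod 2) = 1 from rfl]

lemma fiber_eq {n : ℕ} {T : Type} [DecidableEq T] {s : Fin n → ZMod 2}
    {f : (Fin n → ZMod 2) → T}
    (hf : ∀ x y, f x = f y ↔ y = x ∨ y = x + s) (x₀ : Fin n → ZMod 2) :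
    univ.filter (fun x => f x = f x₀) = {x₀, x₀ + s} := by
  ext x
  simp only [mem_filter, mem_univ, true_and, mem_insert, mem_singleton]
  rw [eq_comm, hf x₀ x]

lemma inner_eval {n : ℕ} {T : Type} [DecidableEq T] {s : Fin n → ZMod 2} (hs : s ≠ 0)
    {f : (Fin n → ZMod 2) → T}
    (hf : ∀ x y, f x = f y ↔ y = x ∨ y = x + s) (j x₀ : Fin n → ZMod 2) :
    |∑ x ∈ univ.filter (fun x => f x = f x₀), (-1 : ℝ) ^ ((∑ i, j i * x i).val)| ^ 2
      = if (∑ i, j i * s i) = 0 then 4 else 0 := by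
  have hne : x₀ ≠ x₀ + s := fun h => hs (left_eq_add.mp h)
  rw [fiber_eq hf x₀, Finset.sum_pair hne]
  have hsplit : (∑ i, j i * (x₀ + s) i) = (∑ i, j i * x₀ i) + ∑ i, j i * s i := by
    simp [mul_add, Finset.sum_add_distrib]
  rw [hsplit, neg_one_pow_val_add]
  set a := ∑ i, j i * x₀ i with ha
  set b := ∑ i, j i * s i with hb
  have ha2 : ((-1 : ℝ) ^ a.val) ^ 2 = 1 := by
    rw [← pow_mul, mul_comm, pow_mul]; norm_num
  rcases zmod2_cases b with hb0 | hb1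
  · rw [hb0, if_pos rfl]
    have : ((0 : ZMod 2)).val = 0 := rfl
    rw [this, sq_abs]
    have : ((-1 : ℝ) ^ a.val + (-1 : ℝ) ^ a.val * (-1) ^ 0) ^ 2
        = 4 * ((-1 : ℝ) ^ a.val) ^ 2 := by ring
    rw [this, ha2]; norm_num
  · rw [hb1, if_neg (by decide)]
    have : ((1 : ZMod 2)).val = 1 := rfl
    rw [this]
    norm_num

lemma card_image_f {n : ℕ} (hn : 1 ≤ n) {T : Type} [DecidableEq T] {s : Fin n → ZMod 2}
    (hs : s ≠ 0) {f : (Fin n → ZMod 2) → T}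
    (hf : ∀ x y, f x = f y ↔ y = x ∨ y = x + s) :
    (univ.image f).card = 2 ^ (n - 1) := by
  have hcard := Finset.card_eq_sum_card_image f (univ : Finset (Fin n → ZMod 2))
  have hfib : ∀ v ∈ univ.image f, (univ.filter fun x => f x = v).card = 2 := by
    intro v hv
    obtain ⟨x₀, -, rfl⟩ := mem_image.mp hv
    have hne : x₀ ≠ x₀ + s := fun h => hs (left_eq_add.mp h)
    rw [fiber_eq hf x₀, Finset.card_pair hne]
  rw [Finset.sum_congr rfl hfib, Finset.sum_const, smul_eq_mul] at hcard
  have huniv : (univ : Finset (Fin n → ZMod 2)).card = 2 ^ n := by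
    simp [Finset.card_univ]
  rw [huniv] at hcard
  have h2 : 2 ^ n = 2 ^ (n - 1) * 2 := by
    rw [← pow_succ]; congr 1; omega
  omega

lemma card_orthogonal {n : ℕ} {s : Fin n → ZMod 2} (hs : s ≠ 0) :
    (univ.filter fun j : Fin n → ZMod 2 => (∑ i, j i * s i) = 0).card = 2 ^ (n - 1) := by
  obtain ⟨i₀, hi₀⟩ : ∃ i, s i ≠ 0 := by
    by_contra h
    push_neg at h
    exact hs (funext fun i => h i)
  have hsi₀ : s i₀ = 1 := by
    rcases zmod2_cases (s i₀) with h | h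
    · exact absurd h hi₀
    · exact h
  set e : Fin n → ZMod 2 := Pi.single i₀ 1 with he
  have hes : (∑ i, e i * s i) = 1 := by
    rw [Finset.sum_eq_single i₀]
    · simp [he, hsi₀]
    · intro i _ hi; simp [he, Pi.single_eq_of_ne hi]
    · intro h; exact absurd (mem_univ i₀) h
  have hadd : ∀ j : Fin n → ZMod 2,
      (∑ i, (j + e) i * s i) = (∑ i, j i * s i) + 1 := by
    intro j
    rw [← hes, ← Finset.sum_add_distrib]
    simp [add_mul]
  have hkey : (univ.filter fun j : Fin n → ZMod 2 => (∑ i, j i * s i) = 0).card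
      = (univ.filter fun j : Fin n → ZMod 2 => (∑ i, j i * s i) = 1).card := by
    apply Finset.card_bij' (fun j _ => j + e) (fun j _ => j + e)
    · intro j hj
      simp only [mem_filter, mem_univ, true_and] at hj ⊢
      rw [hadd, hj]; decide
    · intro j hj
      simp only [mem_filter, mem_univ, true_and] at hj ⊢
      rw [hadd, hj]; decide
    · intro j _
      funext i
      rcases zmod2_cases (e i) with h | h
      · simp [h]
      · simp [h, add_assoc, show (1 + 1 : ZMod 2) = 0 from rfl]
    · intro j _
      funext i
      rcases zmod2_cases (e i) with h | h
      · simp [h]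
      · simp [h, add_assoc, show (1 + 1 : ZMod 2) = 0 from rfl]
  have hsum : (univ.filter fun j : Fin n → ZMod 2 => (∑ i, j i * s i) = 0).card
      + (univ.filter fun j : Fin n → ZMod 2 => ¬((∑ i, j i * s i) = 0)).card
      = (univ : Finset (Fin n → ZMod 2)).card :=
    Finset.card_filter_add_card_filter_not _
  have hneg : (univ.filter fun j : Fin n → ZMod 2 => ¬((∑ i, j i * s i) = 0))
      = univ.filter fun j : Fin n → ZMod 2 => (∑ i, j i * s i) = 1 := by
    apply Finset.filter_congr
    intro j _
    rcases zmod2_cases (∑ i, j i * s i) with h | h <;> simp [h]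
  rw [hneg, ← hkey] at hsum
  have huniv : (univ : Finset (Fin n → ZMod 2)).card = 2 ^ n := by
    simp [Finset.card_univ]
  rw [huniv] at hsum
  have hn : 1 ≤ n := by
    rcases Nat.eq_zero_or_pos n with h | h
    · subst h; exact absurd (funext fun i => i.elim0) hs
    · exact h
  have h2 : 2 ^ (n - 1) * 2 = 2 ^ n := by
    rw [← pow_succ, Nat.sub_add_cancel hn]
  obtain ⟨c, hc⟩ : ∃ c, (univ.filter fun j : Fin n → ZMod 2 => (∑ i, j i * s i) = 0).card = c :=
    ⟨_, rfl⟩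
  rw [hc] at hsum ⊢
  clear hc hkey hneg hadd hes huniv
  omega

/-- For a Simon function with period `s ≠ 0`, the measurement outcome `j` of Simon's
algorithm satisfies `P_f(j) = 2^(1-n)` when `j·s = 0` and `P_f(j) = 0` when `j·s = 1`;
in particular `Σ_j P_f(j) = 1`, so the outcome is uniform over the `2^(n-1)` elements
orthogonal to `s`. -/
theorem simon_outcome_distribution (n : ℕ) (hn : 1 ≤ n) (T : Type) [DecidableEq T]
    (s : Fin n → ZMod 2) (hs : s ≠ 0) (f : (Fin n → ZMod 2) → T)
    (hf : ∀ x y, f x = f y ↔ y = x ∨ y = x + s) :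
    (∀ j : Fin n → ZMod 2, ∑ i, j i * s i = 0 → simonProb f j = (2 : ℝ) ^ ((1 : ℤ) - n)) ∧
    (∀ j : Fin n → ZMod 2, ∑ i, j i * s i = 1 → simonProb f j = 0) ∧
    ∑ j : Fin n → ZMod 2, simonProb f j = 1 := by
  have h2cast : (2 : ℝ) ^ (n - 1 : ℕ) = (2 : ℝ) ^ ((n : ℤ) - 1) := by
    rw [← zpow_natCast]
    congr 1
    omega
  have key : ∀ j : Fin n → ZMod 2,
      simonProb f j = if (∑ i, j i * s i) = 0 then (2 : ℝ) ^ ((1 : ℤ) - n) else 0 := by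
    intro j
    unfold simonProb
    have hcong : ∀ v ∈ univ.image f,
        |∑ x ∈ univ.filter fun x => f x = v, (-1 : ℝ) ^ ((∑ i, j i * x i).val)| ^ 2
          = if (∑ i, j i * s i) = 0 then (4 : ℝ) else 0 := by
      intro v hv
      obtain ⟨x₀, -, rfl⟩ := mem_image.mp hv
      exact inner_eval hs hf j x₀
    rw [Finset.sum_congr rfl hcong, Finset.sum_const, card_image_f hn hs hf]
    by_cases hb : (∑ i, j i * s i) = 0
    · rw [if_pos hb, if_pos hb, nsmul_eq_mul]
      push_cast
      rw [h2cast, show (4 : ℝ) ^ (-(n : ℤ)) = (2 : ℝ) ^ (-(2 * n : ℤ)) by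
            rw [show (4 : ℝ) = (2 : ℝ) ^ (2 : ℤ) by norm_num, ← zpow_mul]; ring_nf,
          show (4 : ℝ) = (2 : ℝ) ^ (2 : ℤ) by norm_num,
          ← zpow_add₀ (two_ne_zero (α := ℝ)), ← zpow_add₀ (two_ne_zero (α := ℝ))]
      congr 1
      ring
    · rw [if_neg hb, if_neg hb, smul_zero, mul_zero]
  refine ⟨fun j hj => by rw [key j, if_pos hj],
    fun j hj => by rw [key j, if_neg (by rw [hj]; exact one_ne_zero)], ?_⟩
  rw [Finset.sum_congr rfl (fun j _ => key j), ← Finset.sum_filter, Finset.sum_const,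
    card_orthogonal hs, nsmul_eq_mul]
  push_cast
  rw [h2cast, ← zpow_add₀ (two_ne_zero (α := ℝ))]
  norm_num
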